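/- Assume C_R ⊆ m_R². Then the conductor of S, namely C_S = {f ∈ k⟦t⟧ : f·k⟦t⟧ ⊆ S}, equals C_R/x₁ = t^{c_R − a₁}·k⟦t⟧. -/

import Mathlib

/-!
Since `C_R` is an ideal of `k⟦t⟧`, so is `J = C_R / x₁`; hence `R + J` is a ring, `S = R + J`, and
`x₁ S ⊆ R`. So `f k⟦t⟧ ⊆ S` gives `x₁ f k⟦t⟧ ⊆ R`, i.e. `f ∈ J`; conversely `J ⊆ S` is an ideal of
`k⟦t⟧`, so `J ⊆ C_S`. Finally, every nonzero power series is `t ^ ord` times a unit, so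
`C_R = t ^ c_R k⟦t⟧`, and dividing by `x₁` of order `a₁` gives `t ^ (c_R - a₁) k⟦t⟧`.
-/

open PowerSeries
set_option synthInstance.maxHeartbeats 1000000
set_option maxHeartbeats 1000000

noncomputable section

def mxl {k : Type*} [Field k] (R : Subalgebra k (PowerSeries k)) : Ideal R :=
  RingHom.ker ((constantCoeff : PowerSeries k →+* k).comp R.val.toRingHom)

namespace Subalgebra

variable {K A : Type*} [CommRing K] [CommRing A] [Algebra K A]

def conductor (R : Subalgebra K A) : Ideal A where
  carrier := {f | ∀ g, f * g ∈ R}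
  zero_mem' g := by simp only [zero_mul, zero_mem]
  add_mem' hf hf' g := by simpa only [add_mul] using add_mem (hf g) (hf' g)
  smul_mem' c f hf g := by simpa only [smul_eq_mul, mul_left_comm, mul_assoc] using hf (c * g)

theorem mem_of_mem_conductor {R : Subalgebra K A} {f : A} (hf : f ∈ R.conductor) : f ∈ R := by
  simpa only [mul_one] using hf 1

/-- The colon ideal `(C_R : x)`, which is `C_R / x` when `x` is a nonzerodivisor. -/
def conductorDiv (R : Subalgebra K A) (x : A) : Ideal A where
  carrier := {h | x * h ∈ R.conductor}
  zero_mem' := by simp only [Set.mem_ofPred_eq, mul_zero, zero_mem]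
  add_mem' hh hh' := by simpa only [Set.mem_ofPred_eq, mul_add] using add_mem hh hh'
  smul_mem' c h hh := by
    simpa only [Set.mem_ofPred_eq, smul_eq_mul, mul_left_comm] using R.conductor.mul_mem_left c hh

def addIdeal (R : Subalgebra K A) (J : Ideal A) : Subalgebra K A :=
  (Subalgebra.toSubmodule R ⊔ J.restrictScalars K).toSubalgebra
    (Submodule.mem_sup_left R.one_mem) fun x y hx hy => by
      obtain ⟨r, hr, j, hj, rfl⟩ := Submodule.mem_sup.mp hx
      obtain ⟨r', hr', j', hj', rfl⟩ := Submodule.mem_sup.mp hy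
      refine Submodule.mem_sup.mpr ⟨r * r', R.mul_mem hr hr', r * j' + j * (r' + j'), ?_, by ring⟩
      exact J.add_mem (J.mul_mem_left r hj') (J.mul_mem_right _ hj)

theorem mem_addIdeal {R : Subalgebra K A} {J : Ideal A} {f : A} :
    f ∈ R.addIdeal J ↔ ∃ r ∈ R, ∃ j ∈ J, r + j = f :=
  Submodule.mem_sup

theorem adjoin_union_conductorDiv_le {R : Subalgebra K A} (x : A) :
    Algebra.adjoin K (R ∪ R.conductorDiv x) ≤ R.addIdeal (R.conductorDiv x) := by
  refine Algebra.adjoin_le (Set.union_subset (fun r hr => ?_) fun j hj => ?_)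
  · exact mem_addIdeal.mpr ⟨r, hr, 0, zero_mem _, add_zero r⟩
  · exact mem_addIdeal.mpr ⟨0, zero_mem R, j, hj, zero_add j⟩

theorem mul_mem_of_mem_adjoin_union_conductorDiv {R : Subalgebra K A} {x s : A} (hx : x ∈ R)
    (hs : s ∈ Algebra.adjoin K (R ∪ R.conductorDiv x)) : x * s ∈ R := by
  obtain ⟨r, hr, j, hj, rfl⟩ := mem_addIdeal.mp (adjoin_union_conductorDiv_le x hs)
  rw [mul_add]
  exact R.add_mem (R.mul_mem hx hr) (mem_of_mem_conductor hj)

theorem conductor_adjoin_union_conductorDiv {R : Subalgebra K A} {x : A} (hx : x ∈ R) :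
    (Algebra.adjoin K (R ∪ R.conductorDiv x)).conductor = R.conductorDiv x := by
  ext f
  refine ⟨fun hf g => ?_, fun hf g => ?_⟩
  · simpa only [mul_assoc] using mul_mem_of_mem_adjoin_union_conductorDiv hx (hf g)
  · exact Algebra.subset_adjoin (Or.inr ((R.conductorDiv x).mul_mem_right g hf))

end Subalgebra

namespace PowerSeries

theorem X_pow_dvd_iff_le_order {R : Type*} [Semiring R] {n : ℕ} {φ : R⟦X⟧} :
    X ^ n ∣ φ ↔ (n : ℕ∞) ≤ φ.order := by
  rw [order_eq_emultiplicity_X, pow_dvd_iff_le_emultiplicity]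

variable {k : Type*} [Field k]

/-- The subtraction is truncated: for `c ≤ a` both sides hold. -/
theorem X_pow_dvd_mul_iff {a c : ℕ} {x h : k⟦X⟧} (hx : x.order = a) :
    X ^ c ∣ x * h ↔ X ^ (c - a) ∣ h := by
  rw [X_pow_dvd_iff_le_order, X_pow_dvd_iff_le_order, order_mul, hx, ENat.natCast_sub,
    tsub_le_iff_left]

theorem mem_conductor_iff_X_pow_dvd {R : Subalgebra k k⟦X⟧} {c : ℕ}
    (hc : IsLeast {n | ∀ g : k⟦X⟧, X ^ n * g ∈ R} c) {f : k⟦X⟧} :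
    f ∈ R.conductor ↔ X ^ c ∣ f := by
  refine ⟨fun hf => ?_, fun ⟨u, hu⟩ g => ?_⟩
  · rcases eq_or_ne f 0 with rfl | hf0
    · exact dvd_zero _
    obtain ⟨u, hu⟩ := isUnit_divided_by_X_pow_order hf0
    have hXf : ∀ g, X ^ f.order.toNat * g ∈ R := fun g => by
      have := hf (↑u⁻¹ * g)
      rwa [← X_pow_order_mul_divXPowOrder (f := f), ← hu, mul_assoc,
        Units.mul_inv_cancel_left] at this
    exact (pow_dvd_pow X (hc.2 hXf)).trans X_pow_order_dvd
  · rw [hu, mul_assoc]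
    exact hc.1 (u * g)

theorem mem_conductorDiv_iff_X_pow_dvd {R : Subalgebra k k⟦X⟧} {a c : ℕ}
    (hc : IsLeast {n | ∀ g : k⟦X⟧, X ^ n * g ∈ R} c) {x h : k⟦X⟧} (hx : x.order = a) :
    h ∈ R.conductorDiv x ↔ X ^ (c - a) ∣ h :=
  (mem_conductor_iff_X_pow_dvd hc).trans (X_pow_dvd_mul_iff hx)

end PowerSeries

theorem stmt6_general {k : Type*} [Field k]
    (R : Subalgebra k (PowerSeries k))
    (c : ℕ) (hc : IsLeast {n : ℕ | ∀ g : PowerSeries k, (X : PowerSeries k) ^ n * g ∈ R} c)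
    (a1 : ℕ) (x1 : PowerSeries k) (hx1R : x1 ∈ R)
    (hx1ord : x1.order = a1)
    (S : Subalgebra k (PowerSeries k))
    (hS : S = Algebra.adjoin k ((R : Set (PowerSeries k)) ∪
        {h : PowerSeries k | ∀ g : PowerSeries k, (x1 * h) * g ∈ R})) :
    -- the conductor of S equals C_R/x₁
    ({f : PowerSeries k | ∀ g : PowerSeries k, f * g ∈ S}
      = {h : PowerSeries k | ∀ g : PowerSeries k, (x1 * h) * g ∈ R}) ∧
    -- and equals t^(c_R - a₁)·k⟦t⟧
    ({f : PowerSeries k | ∀ g : PowerSeries k, f * g ∈ S}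
      = {f : PowerSeries k | ∃ g : PowerSeries k, f = (X : PowerSeries k) ^ (c - a1) * g}) := by
  have hS_conductor : S.conductor = R.conductorDiv x1 := by
    rw [hS]
    exact Subalgebra.conductor_adjoin_union_conductorDiv hx1R
  have hCS : {f : PowerSeries k | ∀ g : PowerSeries k, f * g ∈ S} = R.conductorDiv x1 :=
    congrArg SetLike.coe hS_conductor
  exact ⟨hCS, hCS.trans (Set.ext fun h => mem_conductorDiv_iff_X_pow_dvd hc hx1ord)⟩

theorem stmt6 {k : Type*} [Field k] [IsAlgClosed k] [CharZero k]
    (R : Subalgebra k (PowerSeries k)) (hR : R ≠ ⊤)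
    (hN : ∃ N : ℕ, 1 ≤ N ∧ ∀ g : PowerSeries k, (X : PowerSeries k) ^ N * g ∈ R)
    (c : ℕ) (hc : IsLeast {n : ℕ | ∀ g : PowerSeries k, (X : PowerSeries k) ^ n * g ∈ R} c)
    (a1 : ℕ) (ha1pos : 0 < a1) (x1 : PowerSeries k) (hx1R : x1 ∈ R)
    (hx1ord : x1.order = a1)
    (ha1min : ∀ f ∈ R, f ≠ 0 → constantCoeff f = 0 → (a1 : ℕ∞) ≤ f.order)
    (hC : ∀ r : R, (∀ g : PowerSeries k, (r : PowerSeries k) * g ∈ R) → r ∈ (mxl R) ^ 2)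
    (S : Subalgebra k (PowerSeries k))
    (hS : S = Algebra.adjoin k ((R : Set (PowerSeries k)) ∪
        {h : PowerSeries k | ∀ g : PowerSeries k, (x1 * h) * g ∈ R})) :
    -- the conductor of S equals C_R/x₁
    ({f : PowerSeries k | ∀ g : PowerSeries k, f * g ∈ S}
      = {h : PowerSeries k | ∀ g : PowerSeries k, (x1 * h) * g ∈ R}) ∧
    -- and equals t^(c_R - a₁)·k⟦t⟧
    ({f : PowerSeries k | ∀ g : PowerSeries k, f * g ∈ S}
      = {f : PowerSeries k | ∃ g : PowerSeries k, f = (X : PowerSeries k) ^ (c - a1) * g}) :=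
  stmt6_general R c hc a1 x1 hx1R hx1ord S hS

end
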